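/- arXiv:2310.09931 — 3 statements merged into one kernel-verified Lean document; each statement's English description precedes it below -/
import Mathlib

section
/- Let q ∈ (0,1), Δ² > 0, σ² > 0, and let π := q·δ_0 + (1−q)·N(0, Δ²) be the Gaussian spike and slab measure on ℝ. If (1 + (2q/(1−q))·√(1 + Δ²/σ²)) · Δ²/(σ² + Δ²) < 1, then the function F(u) := G(u, 1/σ²) − u²/(2σ²) is strongly convex on ℝ, i.e. there exists κ > 0 such that u ↦ F(u) − (κ/2)u² is convex on ℝ. -/
open MeasureTheory ProbabilityTheory Filter Set

/-- The (topological) support of a measure on `ℝ`: points all of whose neighborhoods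
have positive measure. -/
def msupp (pr : MeasureTheory.Measure ℝ) : Set ℝ := {x : ℝ | ∀ U ∈ nhds x, pr U ≠ 0}

/-- The cumulant generating function `c(γ₁, γ₂) = log ∫ exp(γ₁ x - γ₂/2 x²) dπ(x)`. -/
noncomputable def cgf (pr : MeasureTheory.Measure ℝ) (γ₁ γ₂ : ℝ) : ℝ :=
  Real.log (∫ x, Real.exp (γ₁ * x - γ₂ / 2 * x ^ 2) ∂pr)

/-- The exponentially tilted measure `π^{(γ₁, γ₂)}`, with density
`exp(γ₁ x - γ₂/2 x² - c(γ₁,γ₂))` with respect to `π`. -/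
noncomputable def tilt (pr : MeasureTheory.Measure ℝ) (γ₁ γ₂ : ℝ) : MeasureTheory.Measure ℝ :=
  pr.withDensity fun x => ENNReal.ofReal (Real.exp (γ₁ * x - γ₂ / 2 * x ^ 2 - cgf pr γ₁ γ₂))

/-- The mean of the tilted measure `π^{(γ₁, γ₂)}`. -/
noncomputable def tiltMean (pr : MeasureTheory.Measure ℝ) (γ₁ γ₂ : ℝ) : ℝ :=
  ∫ x, x ∂(tilt pr γ₁ γ₂)

/-!
For `γ₂ = 1/σ²` the Gaussian slab tilts to a multiple of `N(v t, v)` with `v = Δ²σ²/(σ² + Δ²)`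
(complete the square), so `c(t, 1/σ²) = Ψ t := log (q + b e^{v t²/2})` with
`b = (1 - q) √(v/Δ²)`, and the tilted mean is `Ψ' t`. Hence `u h(u) - c(h(u), 1/σ²)` is the
Legendre transform of `Ψ`. Writing `Ψ'' = v w (1 + v t² (1 - w))` with `w` the posterior weight of
the slab, and using `v t² ≤ 2 e^{v t²/2}`, gives `0 ≤ Ψ'' ≤ L := v (1 + 2q/b)`. The conjugate of a
convex `L`-smooth function is `1/L`-strongly convex, and the hypothesis says exactly `L < σ²`, so
`κ = 1/L - 1/σ²` works.
-/

theorem ConvexOn.add_mul_sub_le_of_hasDerivAt {S : Set ℝ} {f : ℝ → ℝ} {f' x y : ℝ}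
    (hf : ConvexOn ℝ S f) (hx : x ∈ S) (hy : y ∈ S) (hf' : HasDerivAt f f' x) :
    f x + f' * (y - x) ≤ f y := by
  rcases lt_trichotomy x y with hxy | rfl | hyx
  · have := hf.le_slope_of_hasDerivAt hx hy hxy hf'
    rw [slope_def_field, le_div_iff₀ (sub_pos.2 hxy)] at this
    linarith
  · simp
  · have := hf.slope_le_of_hasDerivAt hy hx hyx hf'
    rw [slope_def_field, div_le_iff₀ (sub_pos.2 hyx)] at this
    linarith

theorem ConvexOn.of_forall_le_of_exists_eq {𝕜 E ι : Type*} [Field 𝕜] [LinearOrder 𝕜]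
    [IsStrictOrderedRing 𝕜] [AddCommMonoid E] [Module 𝕜 E] {s : Set E} {f : E → 𝕜}
    {g : ι → E → 𝕜} (hs : Convex 𝕜 s) (hg : ∀ i, ConvexOn 𝕜 s (g i))
    (hle : ∀ i, ∀ x ∈ s, g i x ≤ f x) (heq : ∀ x ∈ s, ∃ i, g i x = f x) :
    ConvexOn 𝕜 s f := by
  refine ⟨hs, fun x hx y hy a b ha hb hab => ?_⟩
  obtain ⟨i, hi⟩ := heq _ (hs hx hy ha hb hab)
  calc f (a • x + b • y) = g i (a • x + b • y) := hi.symm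
    _ ≤ a • g i x + b • g i y := (hg i).2 hx hy ha hb hab
    _ ≤ a • f x + b • f y := by
      gcongr
      exacts [hle i x hx, hle i y hy]

theorem convexOn_univ_of_hasDerivAt2_nonneg {f f' f'' : ℝ → ℝ}
    (hf : ∀ x, HasDerivAt f (f' x) x) (hf' : ∀ x, HasDerivAt f' (f'' x) x)
    (hf'' : ∀ x, 0 ≤ f'' x) : ConvexOn ℝ univ f :=
  convexOn_of_hasDerivWithinAt2_nonneg convex_univ
    (fun x _ => (hf x).differentiableAt.continuousAt.continuousWithinAt)
    (fun x _ => (hf x).hasDerivWithinAt) (fun x _ => (hf' x).hasDerivWithinAt)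
    (fun x _ => hf'' x)

/-- As `Ψ' (h u) = u`, `u * h u - Ψ (h u)` is the Legendre transform of `Ψ`: the conjugate of a
convex `L`-smooth function is `1/L`-strongly convex. -/
theorem convexOn_legendre_sub_sq {Ψ h : ℝ → ℝ} {L : ℝ} (hL : 0 < L)
    (hΨ : ConvexOn ℝ univ Ψ) (hsmooth : ConvexOn ℝ univ fun t => L / 2 * t ^ 2 - Ψ t)
    (hh : ∀ u, HasDerivAt Ψ u (h u)) :
    ConvexOn ℝ univ fun u => u * h u - Ψ (h u) - u ^ 2 / (2 * L) := by
  -- With `t = s + u / L`, `u t - Ψ t - u² / (2L) = φ (s + u / L) - L s² / 2` for the convex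
  -- `φ t = L/2 t² - Ψ t`; the supremum over `s` of these convex functions is attained at `t = h u`.
  set g : ℝ → ℝ → ℝ := fun s u => (L / 2 * (s + u / L) ^ 2 - Ψ (s + u / L)) - L / 2 * s ^ 2
  have hg : ∀ s u, g s u = u * (s + u / L) - Ψ (s + u / L) - u ^ 2 / (2 * L) := by
    intro s u; simp only [g]; field_simp; ring
  refine ConvexOn.of_forall_le_of_exists_eq (g := g) convex_univ (fun s => ?_) (fun s u _ => ?_)
    (fun u _ => ⟨h u - u / L, by rw [hg, sub_add_cancel]⟩)
  · have hφ := (hsmooth.comp_affineMap (AffineMap.lineMap s (s + L⁻¹))).add_const (-(L / 2 * s ^ 2))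
    rw [preimage_univ] at hφ
    refine hφ.congr fun u _ => ?_
    simp only [g, Function.comp_apply, AffineMap.lineMap_apply, Pi.add_apply, smul_eq_mul,
      vsub_eq_sub, vadd_eq_add, add_sub_cancel_left, div_eq_mul_inv]
    ring_nf
  · have := hΨ.add_mul_sub_le_of_hasDerivAt (mem_univ _) (mem_univ (s + u / L)) (hh u)
    rw [hg]
    linarith

noncomputable def spikeSlabCgf (p b v t : ℝ) : ℝ := Real.log (p + b * Real.exp (v * t ^ 2 / 2))

/-- The posterior weight of the slab under the tilted spike-and-slab prior. -/
noncomputable def slabWeight (p b v t : ℝ) : ℝ :=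
  b * Real.exp (v * t ^ 2 / 2) / (p + b * Real.exp (v * t ^ 2 / 2))

section SpikeSlabCgf

variable {p b v : ℝ}

theorem spikeSlab_partition_pos (hp : 0 ≤ p) (hb : 0 < b) (v t : ℝ) :
    0 < p + b * Real.exp (v * t ^ 2 / 2) := by
  positivity

theorem slabWeight_nonneg (hp : 0 ≤ p) (hb : 0 < b) (t : ℝ) : 0 ≤ slabWeight p b v t := by
  unfold slabWeight; positivity

theorem slabWeight_le_one (hp : 0 ≤ p) (hb : 0 < b) (t : ℝ) : slabWeight p b v t ≤ 1 := by
  rw [slabWeight, div_le_one (spikeSlab_partition_pos hp hb v t)]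
  linarith

theorem one_sub_slabWeight (hp : 0 ≤ p) (hb : 0 < b) (t : ℝ) :
    1 - slabWeight p b v t = p / (p + b * Real.exp (v * t ^ 2 / 2)) := by
  have := (spikeSlab_partition_pos hp hb v t).ne'
  rw [slabWeight]
  field_simp
  ring

theorem hasDerivAt_exp_mul_sq_div_two (v t : ℝ) :
    HasDerivAt (fun t => Real.exp (v * t ^ 2 / 2)) (v * t * Real.exp (v * t ^ 2 / 2)) t := by
  have := (((hasDerivAt_pow 2 t).const_mul v).div_const 2).exp
  convert this using 1
  push_cast
  ring

theorem hasDerivAt_spikeSlabCgf (hp : 0 ≤ p) (hb : 0 < b) (t : ℝ) :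
    HasDerivAt (spikeSlabCgf p b v) (v * t * slabWeight p b v t) t := by
  refine ((((hasDerivAt_exp_mul_sq_div_two v t).const_mul b).const_add p).log
    (spikeSlab_partition_pos hp hb v t).ne').congr_deriv ?_
  rw [slabWeight]
  ring

theorem hasDerivAt_slabWeight (hp : 0 ≤ p) (hb : 0 < b) (t : ℝ) :
    HasDerivAt (slabWeight p b v)
      (v * t * (slabWeight p b v t * (1 - slabWeight p b v t))) t := by
  have hE := hasDerivAt_exp_mul_sq_div_two v t
  refine ((hE.const_mul b).fun_div ((hE.const_mul b).const_add p)
    (spikeSlab_partition_pos hp hb v t).ne').congr_deriv ?_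
  rw [one_sub_slabWeight hp hb, slabWeight]
  field_simp
  ring

theorem hasDerivAt_deriv_spikeSlabCgf (hp : 0 ≤ p) (hb : 0 < b) (t : ℝ) :
    HasDerivAt (fun t => v * t * slabWeight p b v t)
      (v * slabWeight p b v t * (1 + v * t ^ 2 * (1 - slabWeight p b v t))) t := by
  refine (((hasDerivAt_id' t).const_mul v).mul
    (hasDerivAt_slabWeight (v := v) hp hb t)).congr_deriv ?_
  ring

theorem sq_mul_slabWeight_mul_one_sub_le (hp : 0 ≤ p) (hb : 0 < b) (t : ℝ) :
    v * t ^ 2 * (slabWeight p b v t * (1 - slabWeight p b v t)) ≤ 2 * p / b := by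
  have hvt : v * t ^ 2 ≤ 2 * Real.exp (v * t ^ 2 / 2) := by
    linarith [Real.add_one_le_exp (v * t ^ 2 / 2)]
  rw [one_sub_slabWeight hp hb, slabWeight]
  have hZ := spikeSlab_partition_pos hp hb v t
  have hE := Real.exp_pos (v * t ^ 2 / 2)
  generalize Real.exp (v * t ^ 2 / 2) = E at hvt hZ hE ⊢
  calc v * t ^ 2 * (b * E / (p + b * E) * (p / (p + b * E)))
      ≤ 2 * E * (b * E / (p + b * E) * (p / (p + b * E))) := by
        gcongr
    _ = 2 * p / b * (b * E / (p + b * E)) ^ 2 := by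
        field_simp
    _ ≤ 2 * p / b := by
        refine mul_le_of_le_one_right (by positivity) (pow_le_one₀ (by positivity) ?_)
        rw [div_le_one hZ]
        linarith

theorem convexOn_spikeSlabCgf (hp : 0 ≤ p) (hb : 0 < b) (hv : 0 ≤ v) :
    ConvexOn ℝ univ (spikeSlabCgf p b v) := by
  refine convexOn_univ_of_hasDerivAt2_nonneg (hasDerivAt_spikeSlabCgf hp hb)
    (hasDerivAt_deriv_spikeSlabCgf hp hb) fun t => ?_
  have := slabWeight_nonneg hp hb (v := v) t
  have := slabWeight_le_one hp hb (v := v) t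
  have : 0 ≤ v * t ^ 2 * (1 - slabWeight p b v t) := by
    apply mul_nonneg <;> [positivity; linarith]
  positivity

theorem convexOn_sq_sub_spikeSlabCgf (hp : 0 ≤ p) (hb : 0 < b) (hv : 0 ≤ v) :
    ConvexOn ℝ univ fun t => v * (1 + 2 * p / b) / 2 * t ^ 2 - spikeSlabCgf p b v t := by
  set L := v * (1 + 2 * p / b)
  refine convexOn_univ_of_hasDerivAt2_nonneg (f' := fun t => L * t - v * t * slabWeight p b v t)
    (fun t => (((hasDerivAt_pow 2 t).const_mul (L / 2)).sub
      (hasDerivAt_spikeSlabCgf hp hb t)).congr_deriv (by ring))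
    (fun t => (hasDerivAt_const_mul L).sub (hasDerivAt_deriv_spikeSlabCgf hp hb t)) fun t => ?_
  have hw1 := slabWeight_le_one hp hb (v := v) t
  have hw0 := slabWeight_nonneg hp hb (v := v) t
  have hcurv := sq_mul_slabWeight_mul_one_sub_le hp hb (v := v) t
  nlinarith

end SpikeSlabCgf

theorem integrable_gaussianReal_iff {μ : ℝ} {v : NNReal} (hv : v ≠ 0) {g : ℝ → ℝ} :
    Integrable g (gaussianReal μ v) ↔ Integrable (fun x => gaussianPDFReal μ v x * g x) := by
  rw [gaussianReal_of_var_ne_zero _ hv, integrable_withDensity_iff_integrable_smul'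
    (measurable_gaussianPDF μ v) (ae_of_all _ fun _ => gaussianPDF_lt_top)]
  simp [toReal_gaussianPDF]

section GaussianTilt

variable {Δ v γ : ℝ}

theorem gaussianPDFReal_mul_exp (hΔ : 0 < Δ) (hv : 0 < v) (hγ : v⁻¹ = Δ⁻¹ + γ) (t x : ℝ) :
    gaussianPDFReal 0 Δ.toNNReal x * Real.exp (t * x - γ / 2 * x ^ 2) =
      √(v / Δ) * Real.exp (v * t ^ 2 / 2) * gaussianPDFReal (v * t) v.toNNReal x := by
  have hγ' : γ = v⁻¹ - Δ⁻¹ := by rw [hγ]; ring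
  simp only [gaussianPDFReal, Real.coe_toNNReal _ hΔ.le, Real.coe_toNNReal _ hv.le]
  have hsqrt : √(v / Δ) * (√(2 * Real.pi * v))⁻¹ = (√(2 * Real.pi * Δ))⁻¹ := by
    rw [← Real.sqrt_inv, ← Real.sqrt_inv, ← Real.sqrt_mul (by positivity)]
    congr 1
    field_simp
  have hexp : -(x - 0) ^ 2 / (2 * Δ) + (t * x - γ / 2 * x ^ 2)
      = v * t ^ 2 / 2 + -(x - v * t) ^ 2 / (2 * v) := by
    rw [hγ']
    field_simp
    ring
  calc _ = (√(2 * Real.pi * Δ))⁻¹ *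
        Real.exp (-(x - 0) ^ 2 / (2 * Δ) + (t * x - γ / 2 * x ^ 2)) := by
        rw [Real.exp_add]; ring
    _ = _ := by rw [hexp, Real.exp_add, ← hsqrt]; ring

theorem integral_mul_exp_gaussianReal (hΔ : 0 < Δ) (hv : 0 < v) (hγ : v⁻¹ = Δ⁻¹ + γ)
    (t : ℝ) (g : ℝ → ℝ) :
    ∫ x, g x * Real.exp (t * x - γ / 2 * x ^ 2) ∂gaussianReal 0 Δ.toNNReal =
      √(v / Δ) * Real.exp (v * t ^ 2 / 2) * ∫ x, g x ∂gaussianReal (v * t) v.toNNReal := by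
  simp only [integral_gaussianReal_eq_integral_smul (Real.toNNReal_pos.2 hΔ).ne',
    integral_gaussianReal_eq_integral_smul (Real.toNNReal_pos.2 hv).ne', smul_eq_mul,
    ← integral_const_mul]
  congr 1 with x
  rw [← mul_assoc _ (gaussianPDFReal _ _ x), ← gaussianPDFReal_mul_exp hΔ hv hγ]
  ring

theorem integrable_mul_exp_gaussianReal (hΔ : 0 < Δ) (hv : 0 < v) (hγ : v⁻¹ = Δ⁻¹ + γ)
    (t : ℝ) {g : ℝ → ℝ} (hg : Integrable g (gaussianReal (v * t) v.toNNReal)) :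
    Integrable (fun x => g x * Real.exp (t * x - γ / 2 * x ^ 2)) (gaussianReal 0 Δ.toNNReal) := by
  rw [integrable_gaussianReal_iff (Real.toNNReal_pos.2 hΔ).ne']
  rw [integrable_gaussianReal_iff (Real.toNNReal_pos.2 hv).ne'] at hg
  refine (hg.const_mul (√(v / Δ) * Real.exp (v * t ^ 2 / 2))).congr (ae_of_all _ fun x => ?_)
  beta_reduce
  rw [← mul_assoc, ← gaussianPDFReal_mul_exp hΔ hv hγ]
  ring

end GaussianTilt

theorem tiltMean_eq_div (pr : Measure ℝ) (γ₁ γ₂ : ℝ) :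
    tiltMean pr γ₁ γ₂ =
      (∫ x, x * Real.exp (γ₁ * x - γ₂ / 2 * x ^ 2) ∂pr) / Real.exp (cgf pr γ₁ γ₂) := by
  rw [tiltMean, tilt, integral_withDensity_eq_integral_toReal_smul (by fun_prop)
    (ae_of_all _ fun _ => ENNReal.ofReal_lt_top), ← integral_div]
  congr 1 with x
  rw [ENNReal.toReal_ofReal (Real.exp_pos _).le, Real.exp_sub, smul_eq_mul]
  ring

noncomputable def spikeSlab (q Δ : ℝ) : Measure ℝ :=
  ENNReal.ofReal q • Measure.dirac 0 + ENNReal.ofReal (1 - q) • gaussianReal 0 Δ.toNNReal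

theorem integral_spikeSlab {q Δ : ℝ} (hq0 : 0 ≤ q) (hq1 : q ≤ 1) {f : ℝ → ℝ}
    (hf : Integrable f (gaussianReal 0 Δ.toNNReal)) :
    ∫ x, f x ∂spikeSlab q Δ = q * f 0 + (1 - q) * ∫ x, f x ∂gaussianReal 0 Δ.toNNReal := by
  rw [spikeSlab, integral_add_measure
    ((integrable_dirac enorm_lt_top).smul_measure ENNReal.ofReal_ne_top)
    (hf.smul_measure ENNReal.ofReal_ne_top), integral_smul_measure, integral_smul_measure,
    integral_dirac, ENNReal.toReal_ofReal hq0, ENNReal.toReal_ofReal (sub_nonneg.2 hq1),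
    smul_eq_mul, smul_eq_mul]

section SpikeSlab

variable {q Δ v γ : ℝ}

theorem integral_exp_spikeSlab (hq0 : 0 ≤ q) (hq1 : q ≤ 1) (hΔ : 0 < Δ) (hv : 0 < v)
    (hγ : v⁻¹ = Δ⁻¹ + γ) (t : ℝ) :
    ∫ x, Real.exp (t * x - γ / 2 * x ^ 2) ∂spikeSlab q Δ =
      q + (1 - q) * √(v / Δ) * Real.exp (v * t ^ 2 / 2) := by
  have hint := integrable_mul_exp_gaussianReal hΔ hv hγ t (integrable_const (1 : ℝ))
  have hgauss := integral_mul_exp_gaussianReal hΔ hv hγ t fun _ => 1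
  simp only [one_mul, integral_const, probReal_univ, smul_eq_mul, mul_one] at hint hgauss
  rw [integral_spikeSlab hq0 hq1 hint, hgauss]
  simp only [mul_zero, sq, sub_self, Real.exp_zero, mul_one]
  ring

theorem integral_mul_exp_spikeSlab (hq0 : 0 ≤ q) (hq1 : q ≤ 1) (hΔ : 0 < Δ) (hv : 0 < v)
    (hγ : v⁻¹ = Δ⁻¹ + γ) (t : ℝ) :
    ∫ x, x * Real.exp (t * x - γ / 2 * x ^ 2) ∂spikeSlab q Δ =
      (1 - q) * √(v / Δ) * Real.exp (v * t ^ 2 / 2) * (v * t) := by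
  rw [integral_spikeSlab hq0 hq1 (integrable_mul_exp_gaussianReal hΔ hv hγ t (g := fun x => x)
      (memLp_one_iff_integrable.1 (memLp_id_gaussianReal 1))),
    integral_mul_exp_gaussianReal hΔ hv hγ t fun x => x, integral_id_gaussianReal]
  ring

theorem cgf_spikeSlab (hq0 : 0 ≤ q) (hq1 : q ≤ 1) (hΔ : 0 < Δ) (hv : 0 < v)
    (hγ : v⁻¹ = Δ⁻¹ + γ) (t : ℝ) :
    cgf (spikeSlab q Δ) t γ = spikeSlabCgf q ((1 - q) * √(v / Δ)) v t := by
  rw [_root_.cgf, integral_exp_spikeSlab hq0 hq1 hΔ hv hγ, spikeSlabCgf]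

theorem tiltMean_spikeSlab (hq0 : 0 ≤ q) (hq1 : q < 1) (hΔ : 0 < Δ) (hv : 0 < v)
    (hγ : v⁻¹ = Δ⁻¹ + γ) (t : ℝ) :
    tiltMean (spikeSlab q Δ) t γ = v * t * slabWeight q ((1 - q) * √(v / Δ)) v t := by
  have hb : 0 < (1 - q) * √(v / Δ) := mul_pos (sub_pos.2 hq1) (Real.sqrt_pos.2 (div_pos hv hΔ))
  rw [tiltMean_eq_div, integral_mul_exp_spikeSlab hq0 hq1.le hΔ hv hγ,
    cgf_spikeSlab hq0 hq1.le hΔ hv hγ, spikeSlabCgf,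
    Real.exp_log (spikeSlab_partition_pos hq0 hb v t), slabWeight]
  ring

end SpikeSlab

/-- The smoothness constant `v (1 + 2q/b)` of `spikeSlabCgf` is `σ²` times the left side of the
threshold condition. -/
theorem spikeSlab_smoothness_eq {q Δ s : ℝ} (hΔ : 0 < Δ) (hs : 0 < s) :
    Δ * s / (s + Δ) * (1 + 2 * q / ((1 - q) * √(Δ * s / (s + Δ) / Δ))) =
      s * ((1 + 2 * q / (1 - q) * √(1 + Δ / s)) * (Δ / (s + Δ))) := by
  have hsqrt : √(1 + Δ / s) = (√(Δ * s / (s + Δ) / Δ))⁻¹ := by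
    rw [← Real.sqrt_inv]
    congr 1
    field_simp
  rw [hsqrt]
  field_simp

/-- for the Gaussian spike and slab prior `π = q δ_0 + (1-q) N(0, Δ²)`,
if `(1 + (2q/(1-q))√(1 + Δ²/σ²)) · Δ²/(σ² + Δ²) < 1` then
`F(u) = G(u, 1/σ²) − u²/(2σ²)` is strongly convex on `ℝ`. -/
theorem stmt12 (q : ℝ) (hq : q ∈ Set.Ioo (0 : ℝ) 1)
    (Δ2 : ℝ) (hΔ2 : 0 < Δ2) (s2 : ℝ) (hs2 : 0 < s2)
    (pr : Measure ℝ)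
    (hpr : pr = ENNReal.ofReal q • MeasureTheory.Measure.dirac (0 : ℝ) +
      ENNReal.ofReal (1 - q) • ProbabilityTheory.gaussianReal 0 Δ2.toNNReal)
    (hcond : (1 + (2 * q / (1 - q)) * Real.sqrt (1 + Δ2 / s2)) * (Δ2 / (s2 + Δ2)) < 1)
    (h : ℝ → ℝ)
    (hh : ∀ u : ℝ, tiltMean pr (h u) (1 / s2) = u) :
    ∃ κ > 0, ConvexOn ℝ Set.univ (fun u =>
      (u * h u - cgf pr (h u) (1 / s2) + cgf pr 0 (1 / s2) - u ^ 2 / (2 * s2))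
        - κ / 2 * u ^ 2) := by
  obtain ⟨hq0, hq1⟩ := hq
  set v := Δ2 * s2 / (s2 + Δ2) with hv_def
  set b := (1 - q) * √(v / Δ2) with hb_def
  set L := v * (1 + 2 * q / b) with hL_def
  have hv : 0 < v := by positivity
  have hγ : v⁻¹ = Δ2⁻¹ + 1 / s2 := by rw [hv_def]; field_simp
  have hb : 0 < b := mul_pos (sub_pos.2 hq1) (Real.sqrt_pos.2 (div_pos hv hΔ2))
  have hL : 0 < L := by positivity
  have hLs2 : L < s2 := by
    rw [hL_def, hb_def, hv_def, spikeSlab_smoothness_eq hΔ2 hs2]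
    exact mul_lt_of_lt_one_right hs2 hcond
  replace hpr : pr = spikeSlab q Δ2 := hpr
  subst hpr
  have hΨ' : ∀ u, HasDerivAt (spikeSlabCgf q b v) u (h u) := fun u => by
    have := hasDerivAt_spikeSlabCgf (v := v) hq0.le hb (h u)
    rwa [← tiltMean_spikeSlab hq0.le hq1 hΔ2 hv hγ, hh u] at this
  have hconv := convexOn_legendre_sub_sq hL (convexOn_spikeSlabCgf hq0.le hb hv.le)
    (convexOn_sq_sub_spikeSlabCgf hq0.le hb hv.le) hΨ'
  refine ⟨1 / L - 1 / s2, sub_pos.2 (one_div_lt_one_div_of_lt hL hLs2),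
    (hconv.add_const (spikeSlabCgf q b v 0)).congr fun u _ => ?_⟩
  simp only [Pi.add_apply, cgf_spikeSlab hq0.le hq1.le hΔ2 hv hγ, ← hb_def]
  field_simp
  ring
end

section
/- Let π be a probability measure on ℝ with bounded support and m(π) < 0 < M(π) (so −∞ < m(π) and M(π) < ∞), and fix d > 0. Then h(u,d) → +∞ as u → M(π)⁻ and h(u,d) → −∞ as u → m(π)⁺; equivalently, the mean of the tilted measure π^{(γ₁,d)} tends to M(π) as γ₁ → +∞ and to m(π) as γ₁ → −∞. -/
open MeasureTheory ProbabilityTheory Filter Set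

/-!
Since the support is bounded, the Gaussian factor `exp (-(d/2) x²)` can be absorbed into the
base measure `ν = π.tilted (-(d/2) x²)`, which has the same null sets as `π`. Then `π^{(γ₁,d)}`
is the exponential tilt of `ν` by `γ₁ x`, and its mean is `K'(γ₁)` for the cumulant generating
function `K` of `ν`. `K'` is nondecreasing (`K''` is a variance), stays strictly inside
`(m(π), M(π))`, and tends to `M(π)` at `+∞` because for `a < b < M(π)` the mass of `ν` above `b`
outweighs, by a factor `exp (γ₁ (b - a))`, everything below `a`. A monotone map with values
below `M(π)` can only attain values close to `M(π)` at large arguments, so its right inverse `h`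
tends to `+∞` at `M(π)`; the side of `m(π)` follows by reflecting `x ↦ -x`.
-/

open Real
open scoped Topology

namespace ProbabilityTheory

variable {Ω : Type*} {mΩ : MeasurableSpace Ω} {μ : Measure Ω} {X : Ω → ℝ}

lemma deriv_cgf_neg (t : ℝ) : deriv (cgf (-X) μ) t = -deriv (cgf X μ) (-t) := by
  rw [show cgf (-X) μ = fun s ↦ cgf X μ (-s) from funext fun s ↦ cgf_neg]
  exact deriv_comp_neg (cgf X μ) t

lemma monotone_deriv_cgf (h : ∀ t, Integrable (fun ω ↦ exp (t * X ω)) μ) :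
    Monotone (deriv (cgf X μ)) := by
  have hint : ∀ t, t ∈ interior (integrableExpSet X μ) := fun t ↦ by
    simp [integrableExpSet, h]
  refine monotone_of_deriv_nonneg (fun t ↦ (analyticAt_cgf (hint t)).deriv.differentiableAt)
    fun t ↦ ?_
  have hvar := variance_tilted_mul (hint t)
  rw [iteratedDeriv_succ (n := 1) (f := cgf X μ), iteratedDeriv_one] at hvar
  exact hvar ▸ variance_nonneg _ _

lemma ae_neg_mem_Icc {m M : ℝ} (hXmem : ∀ᵐ ω ∂μ, X ω ∈ Icc m M) :
    ∀ᵐ ω ∂μ, (-X) ω ∈ Icc (-M) (-m) := by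
  filter_upwards [hXmem] with ω hω using ⟨neg_le_neg hω.2, neg_le_neg hω.1⟩

variable [IsFiniteMeasure μ] {m M : ℝ}

lemma integrable_comp_of_ae_mem_Icc (hX : AEMeasurable X μ) (hXmem : ∀ᵐ ω ∂μ, X ω ∈ Icc m M)
    {g : ℝ → ℝ} (hg : Continuous g) : Integrable (fun ω ↦ g (X ω)) μ := by
  obtain ⟨C, hC⟩ := isCompact_Icc.exists_bound_of_continuousOn hg.continuousOn
  exact .of_bound (hg.comp_aestronglyMeasurable hX.aestronglyMeasurable) C
    (by filter_upwards [hXmem] with ω hω using hC _ hω)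

lemma mem_interior_integrableExpSet_of_ae_mem_Icc (hX : AEMeasurable X μ)
    (hXmem : ∀ᵐ ω ∂μ, X ω ∈ Icc m M) (t : ℝ) : t ∈ interior (integrableExpSet X μ) := by
  rw [eq_univ_of_forall (s := integrableExpSet X μ) fun s ↦
    integrable_exp_mul_of_mem_Icc hX hXmem, interior_univ]
  trivial

lemma deriv_cgf_sub (hX : AEMeasurable X μ) (hXmem : ∀ᵐ ω ∂μ, X ω ∈ Icc m M) (hμ : μ ≠ 0)
    (a t : ℝ) :
    deriv (cgf X μ) t - a = (∫ ω, (X ω - a) * exp (t * X ω) ∂μ) / mgf X μ t := by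
  have hexp : Integrable (fun ω ↦ exp (t * X ω)) μ := integrable_exp_mul_of_mem_Icc hX hXmem
  simp_rw [sub_mul]
  rw [deriv_cgf (mem_interior_integrableExpSet_of_ae_mem_Icc hX hXmem t), integral_sub
    (integrable_comp_of_ae_mem_Icc hX hXmem (g := fun x ↦ x * exp (t * x)) (by fun_prop))
    (hexp.const_mul a), integral_const_mul]
  change _ = (_ - a * mgf X μ t) / mgf X μ t
  rw [sub_div, mul_div_cancel_right₀ _ (mgf_pos' hμ hexp).ne']

lemma deriv_cgf_le (hX : AEMeasurable X μ) (hXmem : ∀ᵐ ω ∂μ, X ω ∈ Icc m M) (hμ : μ ≠ 0)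
    (t : ℝ) : deriv (cgf X μ) t ≤ M := by
  rw [← sub_nonpos, deriv_cgf_sub hX hXmem hμ]
  refine div_nonpos_of_nonpos_of_nonneg (integral_nonpos_of_ae ?_) mgf_nonneg
  filter_upwards [hXmem] with ω hω
  exact mul_nonpos_of_nonpos_of_nonneg (by linarith [hω.2]) (exp_pos _).le

lemma deriv_cgf_lt (hX : AEMeasurable X μ) (hXmem : ∀ᵐ ω ∂μ, X ω ∈ Icc m M)
    (hlt : μ {ω | X ω < M} ≠ 0) (t : ℝ) : deriv (cgf X μ) t < M := by
  have hμ : μ ≠ 0 := fun h ↦ hlt (by simp [h])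
  have hexp : Integrable (fun ω ↦ exp (t * X ω)) μ := integrable_exp_mul_of_mem_Icc hX hXmem
  rw [← sub_neg, deriv_cgf_sub hX hXmem hμ, div_neg_iff]
  refine Or.inr ⟨?_, mgf_pos' hμ hexp⟩
  rw [← neg_pos, ← integral_neg, integral_pos_iff_support_of_nonneg_ae]
  · refine (pos_iff_ne_zero.2 hlt).trans_le (measure_mono fun ω hω ↦ ?_)
    have hne : X ω - M ≠ 0 := sub_ne_zero.2 (ne_of_lt hω)
    simp [Function.mem_support, (exp_pos _).ne', hne]
  · filter_upwards [hXmem] with ω hω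
    simp only [Pi.zero_apply, neg_nonneg]
    exact mul_nonpos_of_nonpos_of_nonneg (by linarith [hω.2]) (exp_pos _).le
  · exact (integrable_comp_of_ae_mem_Icc hX hXmem
      (g := fun x ↦ (x - M) * exp (t * x)) (by fun_prop)).neg

lemma eventually_lt_deriv_cgf_atTop (hX : AEMeasurable X μ) (hXmem : ∀ᵐ ω ∂μ, X ω ∈ Icc m M)
    (hsup : ∀ δ > 0, μ {ω | M - δ < X ω} ≠ 0) {a : ℝ} (ha : a < M) :
    ∀ᶠ t in atTop, a < deriv (cgf X μ) t := by
  obtain ⟨b, hab, hbM⟩ := exists_between ha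
  set s := {ω | b < X ω}
  have hs : NullMeasurableSet s μ := nullMeasurableSet_lt aemeasurable_const hX
  have hp : 0 < μ.real s := ENNReal.toReal_pos
    (by simpa [s] using hsup (M - b) (by linarith)) (measure_ne_top _ _)
  have hμ : μ ≠ 0 := fun h ↦ hp.ne' (by simp [h])
  have hgrow : Tendsto (fun t ↦ (b - a) * μ.real s * exp (t * (b - a))) atTop atTop :=
    (tendsto_exp_atTop.comp (tendsto_id.atTop_mul_const (by linarith))).const_mul_atTop
      (mul_pos (by linarith) hp)
  filter_upwards [eventually_ge_atTop 0,
    hgrow.eventually_gt_atTop ((M - m) * μ.real univ)] with t ht hbig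
  have hexp : Integrable (fun ω ↦ exp (t * X ω)) μ := integrable_exp_mul_of_mem_Icc hX hXmem
  have hlower : ∀ᵐ ω ∂μ, s.indicator (fun _ ↦ (b - a) * exp (t * b)) ω - (M - m) * exp (t * a)
      ≤ (X ω - a) * exp (t * X ω) := by
    filter_upwards [hXmem] with ω ⟨hmω, hMω⟩
    have hC : 0 ≤ (M - m) * exp (t * a) := mul_nonneg (by linarith) (exp_pos _).le
    by_cases hω : ω ∈ s
    · have hb : b < X ω := hω
      have : exp (t * b) ≤ exp (t * X ω) := exp_le_exp.2 (by nlinarith)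
      have := mul_le_mul (by linarith : b - a ≤ X ω - a) this (exp_pos _).le (by linarith)
      rw [indicator_of_mem hω]
      linarith
    · rw [indicator_of_notMem hω, zero_sub]
      rcases le_total a (X ω) with hax | hxa
      · nlinarith [exp_pos (t * X ω)]
      · have : exp (t * X ω) ≤ exp (t * a) := exp_le_exp.2 (by nlinarith)
        nlinarith [exp_pos (t * X ω)]
  have hint : ∫ ω, (s.indicator (fun _ ↦ (b - a) * exp (t * b)) ω - (M - m) * exp (t * a)) ∂μ
      ≤ ∫ ω, (X ω - a) * exp (t * X ω) ∂μ :=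
    integral_mono_ae (((integrable_const _).indicator₀ hs).sub (integrable_const _))
      (integrable_comp_of_ae_mem_Icc hX hXmem (g := fun x ↦ (x - a) * exp (t * x)) (by fun_prop))
      hlower
  rw [integral_sub ((integrable_const _).indicator₀ hs) (integrable_const _),
    integral_indicator₀ hs, setIntegral_const, integral_const, smul_eq_mul, smul_eq_mul] at hint
  rw [← sub_pos, deriv_cgf_sub hX hXmem hμ]
  refine div_pos (lt_of_lt_of_le ?_ hint) (mgf_pos' hμ hexp)
  have hsplit : exp (t * b) = exp (t * a) * exp (t * (b - a)) := by rw [← exp_add]; ring_nf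
  rw [hsplit]
  nlinarith [exp_pos (t * a)]

lemma tendsto_deriv_cgf_atTop (hX : AEMeasurable X μ) (hXmem : ∀ᵐ ω ∂μ, X ω ∈ Icc m M)
    (hsup : ∀ δ > 0, μ {ω | M - δ < X ω} ≠ 0) :
    Tendsto (deriv (cgf X μ)) atTop (𝓝 M) := by
  have hμ : μ ≠ 0 := fun h ↦ hsup 1 one_pos (by simp [h])
  exact tendsto_order.2 ⟨fun a ha ↦ eventually_lt_deriv_cgf_atTop hX hXmem hsup ha,
    fun a ha ↦ .of_forall fun t ↦ (deriv_cgf_le hX hXmem hμ t).trans_lt ha⟩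

lemma tendsto_deriv_cgf_atBot (hX : AEMeasurable X μ) (hXmem : ∀ᵐ ω ∂μ, X ω ∈ Icc m M)
    (hinf : ∀ δ > 0, μ {ω | X ω < m + δ} ≠ 0) :
    Tendsto (deriv (cgf X μ)) atBot (𝓝 m) := by
  have hsup : ∀ δ > 0, μ {ω | -m - δ < (-X) ω} ≠ 0 := fun δ hδ ↦ by
    have hset : {ω | -m - δ < (-X) ω} = {ω | X ω < m + δ} := by
      ext ω
      show -m - δ < -X ω ↔ X ω < m + δ
      constructor <;> intro <;> linarith
    exact hset ▸ hinf δ hδ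
  have hneg := tendsto_deriv_cgf_atTop hX.neg (ae_neg_mem_Icc hXmem) hsup
  have hderiv : deriv (cgf X μ) = fun t ↦ -deriv (cgf (-X) μ) (-t) := by
    funext t
    rw [deriv_cgf_neg, neg_neg, neg_neg]
  rw [hderiv]
  simpa using (hneg.comp tendsto_neg_atBot_atTop).neg

lemma lt_deriv_cgf (hX : AEMeasurable X μ) (hXmem : ∀ᵐ ω ∂μ, X ω ∈ Icc m M)
    (hgt : μ {ω | m < X ω} ≠ 0) (t : ℝ) : m < deriv (cgf X μ) t := by
  have hlt : μ {ω | (-X) ω < -m} ≠ 0 := by simpa using hgt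
  have := deriv_cgf_lt hX.neg (ae_neg_mem_Icc hXmem) hlt (-t)
  rw [deriv_cgf_neg, neg_neg] at this
  linarith

end ProbabilityTheory

theorem Monotone.tendsto_nhdsLT_atTop_of_rightInvOn {α β : Type*} [LinearOrder α]
    [TopologicalSpace α] [OrderTopology α] [LinearOrder β] {f : β → α} {g : α → β} {a M : α}
    (hf : Monotone f) (hlt : ∀ x, f x < M) (ha : a < M) (hg : RightInvOn g f (Ioo a M)) :
    Tendsto g (𝓝[<] M) atTop := by
  refine tendsto_atTop.2 fun R ↦ ?_
  filter_upwards [Ioo_mem_nhdsLT (max_lt ha (hlt R))] with u hu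
  have hfg : f R < f (g u) := by
    rw [hg ⟨(le_max_left _ _).trans_lt hu.1, hu.2⟩]
    exact (le_max_right _ _).trans_lt hu.1
  exact (hf.reflect_lt hfg).le

theorem Monotone.tendsto_nhdsGT_atBot_of_rightInvOn {α β : Type*} [LinearOrder α]
    [TopologicalSpace α] [OrderTopology α] [LinearOrder β] {f : β → α} {g : α → β} {a m : α}
    (hf : Monotone f) (hgt : ∀ x, m < f x) (ha : m < a) (hg : RightInvOn g f (Ioo m a)) :
    Tendsto g (𝓝[>] m) atBot :=
  hf.dual.tendsto_nhdsLT_atTop_of_rightInvOn (α := αᵒᵈ) (β := βᵒᵈ) hgt ha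
    fun _ hu ↦ hg ⟨hu.2, hu.1⟩

lemma ae_mem_msupp (pr : Measure ℝ) : ∀ᵐ x ∂pr, x ∈ msupp pr :=
  measure_null_of_locally_null _ fun x hx ↦ by
    obtain ⟨U, hU, hU0⟩ : ∃ U ∈ 𝓝 x, pr U = 0 := by simpa [msupp] using hx
    exact ⟨U, nhdsWithin_le_nhds hU, hU0⟩

lemma ae_mem_Icc_msupp {pr : Measure ℝ} (hbdd : Bornology.IsBounded (msupp pr)) :
    ∀ᵐ x ∂pr, x ∈ Icc (sInf (msupp pr)) (sSup (msupp pr)) := by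
  filter_upwards [ae_mem_msupp pr] with x hx
    using ⟨csInf_le hbdd.bddBelow hx, le_csSup hbdd.bddAbove hx⟩

lemma measure_Ioi_ne_zero_of_lt_sSup_msupp {pr : Measure ℝ} (hne : (msupp pr).Nonempty) {b : ℝ}
    (hb : b < sSup (msupp pr)) : pr (Ioi b) ≠ 0 := by
  obtain ⟨x, hx, hbx⟩ := exists_lt_of_lt_csSup hne hb
  exact hx _ (isOpen_Ioi.mem_nhds hbx)

lemma measure_Iio_ne_zero_of_sInf_msupp_lt {pr : Measure ℝ} (hne : (msupp pr).Nonempty) {b : ℝ}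
    (hb : sInf (msupp pr) < b) : pr (Iio b) ≠ 0 := by
  obtain ⟨x, hx, hxb⟩ := exists_lt_of_csInf_lt hne hb
  exact hx _ (isOpen_Iio.mem_nhds hxb)

lemma tilt_eq_tilted (pr : Measure ℝ) [NeZero pr] {γ₁ γ₂ : ℝ}
    (hint : Integrable (fun x ↦ exp (γ₁ * x - γ₂ / 2 * x ^ 2)) pr) :
    tilt pr γ₁ γ₂ = pr.tilted fun x ↦ γ₁ * x - γ₂ / 2 * x ^ 2 := by
  rw [tilt, Measure.tilted]
  congr with x
  rw [_root_.cgf, exp_sub, exp_log (integral_exp_pos hint)]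

lemma tiltMean_eq_deriv_cgf {pr : Measure ℝ} [IsProbabilityMeasure pr] {m M : ℝ}
    (hpr : ∀ᵐ x ∂pr, x ∈ Icc m M) (γ₁ γ₂ : ℝ) :
    tiltMean pr γ₁ γ₂ = deriv (cgf id (pr.tilted fun x ↦ -(γ₂ / 2 * x ^ 2))) γ₁ := by
  have hint : ∀ g : ℝ → ℝ, Continuous g → Integrable g pr := fun g hg ↦
    integrable_comp_of_ae_mem_Icc aemeasurable_id hpr hg
  have : IsProbabilityMeasure (pr.tilted fun x ↦ -(γ₂ / 2 * x ^ 2)) :=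
    isProbabilityMeasure_tilted (hint _ (by fun_prop))
  have hν : ∀ᵐ x ∂(pr.tilted fun x ↦ -(γ₂ / 2 * x ^ 2)), x ∈ Icc m M :=
    (tilted_absolutelyContinuous _ _).ae_le hpr
  rw [← integral_tilted_mul_self
      (mem_interior_integrableExpSet_of_ae_mem_Icc aemeasurable_id hν γ₁),
    tilted_tilted (hint _ (by fun_prop)), tiltMean, tilt_eq_tilted pr (hint _ (by fun_prop))]
  congr 2
  funext x
  simp only [Pi.add_apply, id]
  ring

theorem stmt13_general (pr : Measure ℝ) [IsProbabilityMeasure pr]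
    (hbdd : Bornology.IsBounded (msupp pr))
    (hneg : ∃ x ∈ msupp pr, x < 0) (hpos : ∃ x ∈ msupp pr, 0 < x)
    (d : ℝ)
    (h : ℝ → ℝ)
    (hh : ∀ u ∈ Set.Ioo (sInf (msupp pr)) (sSup (msupp pr)), tiltMean pr (h u) d = u) :
    Filter.Tendsto h (nhdsWithin (sSup (msupp pr)) (Set.Iio (sSup (msupp pr)))) Filter.atTop ∧
    Filter.Tendsto h (nhdsWithin (sInf (msupp pr)) (Set.Ioi (sInf (msupp pr)))) Filter.atBot ∧
    Filter.Tendsto (fun γ₁ => tiltMean pr γ₁ d) Filter.atTop (nhds (sSup (msupp pr))) ∧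
    Filter.Tendsto (fun γ₁ => tiltMean pr γ₁ d) Filter.atBot (nhds (sInf (msupp pr))) := by
  obtain ⟨xn, hxn, hxn0⟩ := hneg
  obtain ⟨xp, hxp, hxp0⟩ := hpos
  have hmM : sInf (msupp pr) < sSup (msupp pr) :=
    (csInf_le hbdd.bddBelow hxn).trans_lt <|
      hxn0.trans <| hxp0.trans_le (le_csSup hbdd.bddAbove hxp)
  have hpr := ae_mem_Icc_msupp hbdd
  set ν := pr.tilted fun x ↦ -(d / 2 * x ^ 2)
  have hν : ∀ᵐ x ∂ν, x ∈ Icc (sInf (msupp pr)) (sSup (msupp pr)) :=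
    (tilted_absolutelyContinuous _ _).ae_le hpr
  have hνpos : ∀ s, pr s ≠ 0 → ν s ≠ 0 := fun s hs h0 ↦ hs <|
    absolutelyContinuous_tilted (f := fun x ↦ -(d / 2 * x ^ 2))
      (integrable_comp_of_ae_mem_Icc aemeasurable_id hpr (g := fun x ↦ exp (-(d / 2 * x ^ 2)))
        (by fun_prop)) h0
  have hmean : (fun γ₁ ↦ tiltMean pr γ₁ d) = deriv (cgf id ν) :=
    funext fun γ₁ ↦ tiltMean_eq_deriv_cgf hpr γ₁ d
  have hmono := monotone_deriv_cgf fun t ↦ integrable_exp_mul_of_mem_Icc aemeasurable_id hν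
  have hinv : RightInvOn h (deriv (cgf id ν)) (Ioo (sInf (msupp pr)) (sSup (msupp pr))) :=
    fun u hu ↦ (congrFun hmean (h u)).symm.trans (hh u hu)
  rw [hmean]
  exact ⟨hmono.tendsto_nhdsLT_atTop_of_rightInvOn (deriv_cgf_lt aemeasurable_id hν
      (hνpos _ (measure_Iio_ne_zero_of_sInf_msupp_lt ⟨xn, hxn⟩ hmM))) hmM hinv,
    hmono.tendsto_nhdsGT_atBot_of_rightInvOn (lt_deriv_cgf aemeasurable_id hν
      (hνpos _ (measure_Ioi_ne_zero_of_lt_sSup_msupp ⟨xn, hxn⟩ hmM))) hmM hinv,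
    tendsto_deriv_cgf_atTop aemeasurable_id hν fun δ hδ ↦
      hνpos _ (measure_Ioi_ne_zero_of_lt_sSup_msupp ⟨xn, hxn⟩ (by linarith)),
    tendsto_deriv_cgf_atBot aemeasurable_id hν fun δ hδ ↦
      hνpos _ (measure_Iio_ne_zero_of_sInf_msupp_lt ⟨xn, hxn⟩ (by linarith))⟩

/-- for a probability measure `π` with bounded support and
`m(π) < 0 < M(π)`, and `d > 0`: `h(u,d) → +∞` as `u → M(π)⁻`, `h(u,d) → −∞` as
`u → m(π)⁺`; equivalently, the mean of `π^{(γ₁,d)}` tends to `M(π)` as `γ₁ → +∞`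
and to `m(π)` as `γ₁ → −∞`. -/
theorem stmt13 (pr : Measure ℝ) [IsProbabilityMeasure pr]
    (hbdd : Bornology.IsBounded (msupp pr))
    (hneg : ∃ x ∈ msupp pr, x < 0) (hpos : ∃ x ∈ msupp pr, 0 < x)
    (d : ℝ) (hd : 0 < d)
    (h : ℝ → ℝ)
    (hh : ∀ u ∈ Set.Ioo (sInf (msupp pr)) (sSup (msupp pr)), tiltMean pr (h u) d = u) :
    Filter.Tendsto h (nhdsWithin (sSup (msupp pr)) (Set.Iio (sSup (msupp pr)))) Filter.atTop ∧
    Filter.Tendsto h (nhdsWithin (sInf (msupp pr)) (Set.Ioi (sInf (msupp pr)))) Filter.atBot ∧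
    Filter.Tendsto (fun γ₁ => tiltMean pr γ₁ d) Filter.atTop (nhds (sSup (msupp pr))) ∧
    Filter.Tendsto (fun γ₁ => tiltMean pr γ₁ d) Filter.atBot (nhds (sInf (msupp pr))) :=
  stmt13_general pr hbdd hneg hpos d h hh
end

section
/- Let F : ℝ → ℝ be differentiable and κ-strongly convex for some κ > 0, and fix x ∈ ℝ. Then the map t ↦ |x − η(x,t)| is nondecreasing on (0,∞); moreover, if F′(x) ≠ 0 then it is strictly increasing on (0,∞). -/
open MeasureTheory Filter Set

/-- let `F : ℝ → ℝ` be differentiable and `κ`-strongly convex (`κ > 0`), and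
let `η(x,t)` be the (unique) minimizer over `ℝ` of `w ↦ (w − x)²/(2t) + F(w)`. For fixed
`x`, the map `t ↦ |x - η(x,t)|` is nondecreasing on `(0,∞)`, and strictly increasing on
`(0,∞)` if `F′(x) ≠ 0`. -/
theorem stmt15 (F : ℝ → ℝ) (hF : Differentiable ℝ F)
    (κ : ℝ) (hκ : 0 < κ)
    (hconv : ConvexOn ℝ Set.univ (fun w => F w - κ / 2 * w ^ 2))
    (η : ℝ → ℝ → ℝ)
    (hη : ∀ x t : ℝ, 0 < t →
      ∀ w : ℝ, (η x t - x) ^ 2 / (2 * t) + F (η x t) ≤ (w - x) ^ 2 / (2 * t) + F w)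
    (x : ℝ) :
    MonotoneOn (fun t => |x - η x t|) (Set.Ioi 0) ∧
    (deriv F x ≠ 0 → StrictMonoOn (fun t => |x - η x t|) (Set.Ioi 0)) := by
  -- First-order condition
  have foc : ∀ t : ℝ, 0 < t → x - η x t = t * deriv F (η x t) := by
    intro t ht
    set y := η x t with hy
    have hmin : IsLocalMin (fun w => (w - x) ^ 2 / (2 * t) + F w) y :=
      Filter.Eventually.of_forall (hη x t ht)
    have hd : HasDerivAt (fun w => (w - x) ^ 2 / (2 * t) + F w)
        (((2 : ℕ) * (y - x) ^ (2 - 1) * 1) / (2 * t) + deriv F y) y :=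
      ((((hasDerivAt_id y).sub_const x).pow 2).div_const (2 * t)).add (hF y).hasDerivAt
    have h0 := hmin.hasDerivAt_eq_zero hd
    have ht' : (2 : ℝ) * t ≠ 0 := by positivity
    field_simp at h0
    norm_num at h0
    nlinarith [h0]
  -- squared distance is monotone
  have key : ∀ s t : ℝ, 0 < s → s < t → (η x s - x) ^ 2 ≤ (η x t - x) ^ 2 := by
    intro s t hs hst
    have ht : 0 < t := hs.trans hst
    have hA := hη x s hs (η x t)
    have hB := hη x t ht (η x s)
    set a := (η x s - x) ^ 2
    set b := (η x t - x) ^ 2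
    have hs2 : (0 : ℝ) < 2 * s := by linarith
    have ht2 : (0 : ℝ) < 2 * t := by linarith
    have hA' : a - b ≤ (F (η x t) - F (η x s)) * (2 * s) := by
      rw [← sub_nonneg] at hA ⊢
      have := mul_nonneg hA hs2.le
      field_simp at this ⊢
      nlinarith [this]
    have hB' : b - a ≤ (F (η x s) - F (η x t)) * (2 * t) := by
      rw [← sub_nonneg] at hB ⊢
      have := mul_nonneg hB ht2.le
      field_simp at this ⊢
      nlinarith [this]
    nlinarith [hA', hB', hs, ht, hst]
  have mono : MonotoneOn (fun t => |x - η x t|) (Set.Ioi 0) := by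
    intro s hs t ht hst
    rcases eq_or_lt_of_le hst with rfl | h
    · exact le_rfl
    · have := key s t hs h
      simp only
      rw [← Real.sqrt_sq_eq_abs, ← Real.sqrt_sq_eq_abs]
      apply Real.sqrt_le_sqrt
      nlinarith [this]
  refine ⟨mono, fun hne => ?_⟩
  -- monotonicity of deriv F - κ • id
  have hG : ∀ w : ℝ, deriv (fun w => F w - κ / 2 * w ^ 2) w = deriv F w - κ * w := by
    intro w
    have h1 : HasDerivAt (fun w => F w - κ / 2 * w ^ 2) (deriv F w - κ * w) w := by
      have h2 : HasDerivAt (fun w => F w - κ / 2 * w ^ 2) _ w := (hF w).hasDerivAt.sub ((hasDerivAt_pow 2 w).const_mul (κ / 2))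
      convert h2 using 1
      push_cast
      norm_num
      ring
    exact h1.deriv
  have hmono : ∀ a b : ℝ, a ≤ b → deriv F a - κ * a ≤ deriv F b - κ * b := by
    intro a b hab
    have hdiff : ∀ w ∈ (Set.univ : Set ℝ), DifferentiableAt ℝ (fun w => F w - κ / 2 * w ^ 2) w :=
      fun w _ => (hF w).sub ((differentiableAt_pow 2).const_mul (κ / 2))
    have h := hconv.monotoneOn_deriv hdiff (Set.mem_univ a) (Set.mem_univ b) hab
    rwa [hG a, hG b] at h
  intro s hs t ht hst
  have hs' : (0 : ℝ) < s := hs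
  have ht' : (0 : ℝ) < t := ht
  refine lt_of_le_of_ne (mono hs ht hst.le) ?_
  intro heq
  set u := η x s with hu
  set v := η x t with hv
  have focs : x - u = s * deriv F u := foc s hs'
  have foct : x - v = t * deriv F v := foc t ht'
  have habs : x - u = x - v ∨ x - u = -(x - v) := abs_eq_abs.mp heq
  have hFx0 : ∀ y : ℝ, y = x → deriv F y = 0 → False := by
    intro y hyx hy0
    exact hne (by rw [← hyx]; exact hy0)
  rcases habs with hcase | hcase
  · -- u = v
    have huv : u = v := by linarith
    have hd0 : (s - t) * deriv F u = 0 := by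
      rw [huv] at focs ⊢
      linarith
    rcases mul_eq_zero.mp hd0 with h | h
    · linarith
    · exact hFx0 u (by nlinarith [focs, h]) h
  · -- u + v = 2x
    rcases lt_trichotomy u v with h | h | h
    · have hm := hmono u v h.le
      nlinarith [mul_pos hs' ht', mul_pos (mul_pos hs' ht') hκ, hm, focs, foct]
    · have hux : u = x := by linarith
      exact hFx0 u hux (by nlinarith [focs, hux, hs'])
    · have hm := hmono v u h.le
      nlinarith [mul_pos hs' ht', mul_pos (mul_pos hs' ht') hκ, hm, focs, foct]
end
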